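/- If κ is an ordinal and there is a transitive set W with κ ∈ W such that V_κ ≺ W is a proper elementary extension (in particular, if V_κ ≺ V_γ for some γ > κ), then κ is a strong limit cardinal. -/

import Mathlib

open FirstOrder Language

namespace SUP

/-! ### The von Neumann hierarchy inside `ZFSet` -/

/-- The von Neumann ordinal corresponding to an `Ordinal`, as a `ZFSet`. -/
noncomputable def vN (o : Ordinal.{0}) : ZFSet.{0} :=
  ZFSet.range fun i : o.ToType => vN ((Ordinal.ToType.mk (o := o)).symm i).1
termination_by o
decreasing_by exact ((Ordinal.ToType.mk (o := o)).symm i).2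

/-- The rank-initial segment `V_α` of the universe of ZF sets. -/
def Vrank (α : Ordinal.{0}) : Set ZFSet.{0} := {x | x.rank < α}

/-- `H_κ`: the class of sets whose hereditary size is less than the cardinal `κ`. -/
def Hset (κ : Cardinal.{0}) : Set ZFSet.{0} :=
  {x | ∃ t : ZFSet.{0}, t.IsTransitive ∧ x ∈ t ∧ Cardinal.mk t.toSet < Cardinal.lift.{1} κ}

/-- An ordinal is inaccessible when it is (the ordinal of) an inaccessible cardinal. -/
def IsInaccOrd (γ : Ordinal.{0}) : Prop := γ.card.IsInaccessible ∧ γ.card.ord = γ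

/-- A cardinal `κ` is weakly compact: it is inaccessible and every 2-coloring of pairs
from `κ` admits a homogeneous set of size `κ`. -/
def IsWeaklyCompactCard (κ : Cardinal.{0}) : Prop :=
  κ.IsInaccessible ∧ ∀ f : κ.ord.ToType → κ.ord.ToType → Bool,
    ∃ H : Set κ.ord.ToType, Cardinal.mk H = κ ∧
      ∃ b : Bool, ∀ x ∈ H, ∀ y ∈ H, x < y → f x y = b

/-- An ordinal is weakly compact when it is (the ordinal of) a weakly compact cardinal. -/
def IsWCOrd (γ : Ordinal.{0}) : Prop := IsWeaklyCompactCard γ.card ∧ γ.card.ord = γ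

/-! ### Languages -/

/-- The language of set theory: one binary relation `∈`. -/
def memL : FirstOrder.Language.{0, 0} :=
  ⟨fun _ => Empty, fun n => match n with | 2 => Unit | _ => Empty⟩

/-- The language of set theory with an additional unary predicate. -/
def predL : FirstOrder.Language.{0, 0} :=
  ⟨fun _ => Empty, fun n => match n with | 1 => Unit | 2 => Unit | _ => Empty⟩

/-- The language of set theory with an additional unary predicate
and an additional binary relation (the graph of a partial function). -/
def pfL : FirstOrder.Language.{0, 0} :=
  ⟨fun _ => Empty, fun n => match n with | 1 => Unit | 2 => Bool | _ => Empty⟩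

def memSym : memL.Relations 2 := Unit.unit

/-! ### Structures -/

/-- The `∈`-structure on a collection `S` of ZF sets. -/
def strMem (S : Set ZFSet.{0}) : memL.Structure S where
  funMap {n} F _ := F.elim
  RelMap {n} r v :=
    match n, r, v with
    | 2, _, v => (v 0 : ZFSet) ∈ (v 1 : ZFSet)
    | 0, r, _ => r.elim
    | 1, r, _ => r.elim
    | _ + 3, r, _ => r.elim

/-- The structure `⟨S, ∈, A⟩` on a collection `S` of ZF sets with predicate `A`. -/
def strPred (S A : Set ZFSet.{0}) : predL.Structure S where
  funMap {n} F _ := F.elim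
  RelMap {n} r v :=
    match n, r, v with
    | 1, _, v => (v 0 : ZFSet) ∈ A
    | 2, _, v => (v 0 : ZFSet) ∈ (v 1 : ZFSet)
    | 0, r, _ => r.elim
    | _ + 3, r, _ => r.elim

/-- The structure `⟨S, ∈, A, f⟩` on a collection `S` of ZF sets with predicate `A` and
(the graph of) a partial function `f` defined on the ordinals below `d`. -/
def strPF (S A : Set ZFSet.{0}) (f : Ordinal.{0} → ZFSet.{0}) (d : Ordinal.{0}) :
    pfL.Structure S where
  funMap {n} F _ := F.elim
  RelMap {n} r v :=
    match n, r, v with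
    | 1, _, v => (v 0 : ZFSet) ∈ A
    | 2, b, v =>
      match b with
      | false => (v 0 : ZFSet) ∈ (v 1 : ZFSet)
      | true => ∃ α : Ordinal.{0}, α < d ∧ (v 0 : ZFSet) = vN α ∧ (v 1 : ZFSet) = f α
    | 0, r, _ => r.elim
    | _ + 3, r, _ => r.elim

/-! ### Elementary extensions and embeddings -/

/-- `⟨S,∈⟩` is an elementary substructure of `⟨T,∈⟩`: the inclusion is elementary. -/
def MemExt (S T : Set ZFSet.{0}) : Prop :=
  ∃ h : S ⊆ T, ∀ (n : ℕ) (φ : memL.Formula (Fin n)) (v : Fin n → S),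
    (letI := strMem S; φ.Realize v) ↔
      (letI := strMem T; φ.Realize fun i => (⟨(v i : ZFSet), h (v i).2⟩ : T))

/-- `⟨S,∈,A⟩` is an elementary substructure of `⟨T,∈,B⟩`: the inclusion is elementary. -/
def PredExt (S A T B : Set ZFSet.{0}) : Prop :=
  ∃ h : S ⊆ T, ∀ (n : ℕ) (φ : predL.Formula (Fin n)) (v : Fin n → S),
    (letI := strPred S A; φ.Realize v) ↔
      (letI := strPred T B; φ.Realize fun i => (⟨(v i : ZFSet), h (v i).2⟩ : T))

/-- `⟨S,∈,A,f⟩` is an elementary substructure of `⟨T,∈,B,g⟩`: the inclusion is elementary. -/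
def PFExt (S A : Set ZFSet.{0}) (f : Ordinal.{0} → ZFSet.{0}) (d : Ordinal.{0})
    (T B : Set ZFSet.{0}) (g : Ordinal.{0} → ZFSet.{0}) (e : Ordinal.{0}) : Prop :=
  ∃ h : S ⊆ T, ∀ (n : ℕ) (φ : pfL.Formula (Fin n)) (v : Fin n → S),
    (letI := strPF S A f d; φ.Realize v) ↔
      (letI := strPF T B g e; φ.Realize fun i => (⟨(v i : ZFSet), h (v i).2⟩ : T))

/-- An elementary embedding (for the language of set theory) of `⟨S,∈⟩` into `⟨T,∈⟩`,
given by (the restriction to `S` of) a function `j`. -/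
structure ElemEmb (S T : Set ZFSet.{0}) (j : ZFSet.{0} → ZFSet.{0}) : Prop where
  maps_mem : ∀ x ∈ S, j x ∈ T
  elem : ∀ (n : ℕ) (φ : memL.Formula (Fin n)) (v : Fin n → S),
    (letI := strMem S; φ.Realize v) ↔
      (letI := strMem T; φ.Realize fun i => (⟨j (v i), maps_mem _ (v i).2⟩ : T))

end SUP
namespace SUP
open FirstOrder Language

/-! ### The ZFC axioms, as sentences in the language of set theory -/

/-- The atomic formula `xᵢ ∈ xⱼ`. -/
def mF {n : ℕ} (i j : Fin n) : memL.BoundedFormula Empty n :=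
  memSym.boundedFormula₂ (Term.var (Sum.inr i)) (Term.var (Sum.inr j))

/-- The atomic formula `xᵢ = xⱼ`. -/
def eF {n : ℕ} (i j : Fin n) : memL.BoundedFormula Empty n :=
  Term.bdEqual (Term.var (Sum.inr i)) (Term.var (Sum.inr j))

/-- Extensionality: `∀x∀y ((∀z (z∈x ↔ z∈y)) → x=y)`. -/
def axExt : memL.Sentence :=
  ((((mF 2 0 ⇔ mF 2 1).all ⟹ eF 0 1).all).all)

/-- Empty set: `∃x ∀z (z ∉ x)`. -/
def axEmpty : memL.Sentence := (((∼(mF 1 0)).all).ex)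

/-- Pairing: `∀x∀y∃p∀z (z∈p ↔ (z=x ∨ z=y))`. -/
def axPair : memL.Sentence :=
  ((((((mF 3 2 ⇔ (eF 3 0 ⊔ eF 3 1)).all).ex).all).all))

/-- Union: `∀x∃u∀z (z∈u ↔ ∃w (w∈x ∧ z∈w))`. -/
def axUnion : memL.Sentence :=
  ((((mF 2 1 ⇔ ((mF 3 0 ⊓ mF 2 3).ex)).all).ex).all)

/-- Power set: `∀x∃p∀z (z∈p ↔ ∀w (w∈z → w∈x))`. -/
def axPow : memL.Sentence :=
  ((((mF 2 1 ⇔ ((mF 3 2 ⟹ mF 3 0).all)).all).ex).all)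

/-- Foundation: `∀x (∃y (y∈x) → ∃y (y∈x ∧ ∀z (z∈x → z∉y)))`. -/
def axFound : memL.Sentence :=
  (((mF 1 0).ex ⟹ ((mF 1 0 ⊓ ((mF 2 0 ⟹ ∼(mF 2 1)).all)).ex)).all)

/-- Infinity: `∃I ((∃e (e∈I ∧ ∀z (z∉e))) ∧ ∀x (x∈I → ∃s (s∈I ∧ ∀z (z∈s ↔ (z∈x ∨ z=x)))))`. -/
def axInf : memL.Sentence :=
  ((((mF 1 0 ⊓ ((∼(mF 2 1)).all)).ex) ⊓
    ((mF 1 0 ⟹ (((mF 2 0) ⊓ (((mF 3 2) ⇔ ((mF 3 1) ⊔ (eF 3 1))).all)).ex)).all)).ex)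

/-- In context `n`, the formula `xᵢ = {xₐ}` (a singleton). -/
def singF {n : ℕ} (i a : Fin n) : memL.BoundedFormula Empty n :=
  ((mF (Fin.last n) i.castSucc ⇔ eF (Fin.last n) a.castSucc).all)

/-- In context `n`, the formula `xᵢ = {xₐ, x_b}`. -/
def upairF {n : ℕ} (i a b : Fin n) : memL.BoundedFormula Empty n :=
  ((mF (Fin.last n) i.castSucc ⇔ (eF (Fin.last n) a.castSucc ⊔ eF (Fin.last n) b.castSucc)).all)

/-- In context `n`, the formula `xᵢ = ⟨xₐ, x_b⟩` (Kuratowski pair). -/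
def opairF {n : ℕ} (i a b : Fin n) : memL.BoundedFormula Empty n :=
  (((mF (Fin.last n) i.castSucc) ⇔
    ((singF (Fin.last n) a.castSucc) ⊔ (upairF (Fin.last n) a.castSucc b.castSucc))).all)

/-- In context `n`, the formula `⟨xₐ, x_b⟩ ∈ xᵣ`. -/
def opMemF {n : ℕ} (a b r : Fin n) : memL.BoundedFormula Empty n :=
  (((mF (Fin.last n) r.castSucc) ⊓ (opairF (Fin.last n) a.castSucc b.castSucc)).ex)

/-- The well-ordering principle (the form of the axiom of choice appropriate for `ZFC⁻`):
every set admits a well-order. -/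
def woTot : memL.BoundedFormula Empty 2 :=
  ((((mF 2 0 ⊓ mF 3 0) ⟹ ((eF 2 3) ⊔ ((opMemF 2 3 1) ⊔ (opMemF 3 2 1)))).all).all)

def woTrans : memL.BoundedFormula Empty 2 :=
  (((((opMemF 2 3 1 ⊓ opMemF 3 4 1) ⟹ opMemF 2 4 1).all).all).all)

def woIrr : memL.BoundedFormula Empty 2 :=
  (((mF 2 0) ⟹ ∼(opMemF 2 2 1)).all)

def woLeast : memL.BoundedFormula Empty 2 :=
  (((((mF 3 2 ⟹ mF 3 0).all) ⊓ ((mF 3 2).ex)) ⟹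
      (((mF 3 2) ⊓ (((mF 4 2) ⟹ ∼(opMemF 4 3 1)).all)).ex)).all)

/-- The well-ordering principle (the form of the axiom of choice appropriate for `ZFC⁻`):
every set admits a well-order. -/
def axWO : memL.Sentence := (((woTot ⊓ woTrans ⊓ woIrr ⊓ woLeast).ex).all)

/-- The separation axiom for the formula `φ`, whose free variables are:
`n` parameters, then the ambient set (variable `n`), then the element variable `n+1`. -/
def sepAx (n : ℕ) (φ : memL.BoundedFormula Empty (n + 2)) : memL.Sentence :=
  -- ∀ params ∀a ∃b ∀z (z ∈ b ↔ (z ∈ a ∧ φ))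
  ((((mF ⟨n+2, by omega⟩ ⟨n+1, by omega⟩ ⇔
      ((mF ⟨n+2, by omega⟩ ⟨n, by omega⟩) ⊓ (φ.liftAt 1 (n+1)))).all).ex).all).alls

/-- The collection axiom for the formula `φ`, whose free variables are:
`n` parameters, then the ambient set (variable `n`), then variables `n+1`, `n+2`
standing for an element of the ambient set and a corresponding witness. -/
def collAx (n : ℕ) (φ : memL.BoundedFormula Empty (n + 3)) : memL.Sentence :=
  -- ∀ params ∀a ((∀z (z∈a → ∃w φ)) → ∃b ∀z (z∈a → ∃w (w∈b ∧ φ)))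
  let lhs : memL.BoundedFormula Empty (n + 1) :=
    ((mF ⟨n+1, by omega⟩ ⟨n, by omega⟩ ⟹ φ.ex).all)
  let rhs : memL.BoundedFormula Empty (n + 1) :=
    (((mF ⟨n+2, by omega⟩ ⟨n, by omega⟩ ⟹
        ((mF ⟨n+3, by omega⟩ ⟨n+1, by omega⟩ ⊓ (φ.liftAt 1 (n+1))).ex)).all).ex)
  (((lhs ⟹ rhs).all).alls)

/-- The theory `ZFC⁻`: ZFC without the power set axiom, with collection and with the
well-ordering principle as the form of choice. -/
def ZFCminus : memL.Theory :=
  {axExt, axEmpty, axPair, axUnion, axFound, axInf, axWO} ∪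
    (Set.range fun p : (n : ℕ) × memL.BoundedFormula Empty (n + 2) => sepAx p.1 p.2) ∪
    (Set.range fun p : (n : ℕ) × memL.BoundedFormula Empty (n + 3) => collAx p.1 p.2)

/-- The theory `ZFC`. -/
def ZFC : memL.Theory := insert axPow ZFCminus

/-- The set `M`, equipped with `∈`, satisfies the theory `T`. -/
def SatT (M : ZFSet.{0}) (T : memL.Theory) : Prop :=
  ∀ σ ∈ T, (letI := strMem M.toSet; Sentence.Realize (M := M.toSet) σ)

end SUP
namespace SUP
open FirstOrder Language

/-! ### Strongly uplifting cardinals -/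

/-- `κ` is strongly `θ`-uplifting: `κ` is inaccessible, and for every `A ⊆ κ` there is an
inaccessible `γ ≥ θ` and `A* ⊆ γ` with `⟨V_κ,∈,A⟩ ≺ ⟨V_γ,∈,A*⟩` a proper elementary
extension. -/
def SUplift (κ θ : Ordinal.{0}) : Prop :=
  IsInaccOrd κ ∧ ∀ A : Set Ordinal.{0}, A ⊆ Set.Iio κ →
    ∃ γ : Ordinal.{0}, θ ≤ γ ∧ IsInaccOrd γ ∧ κ < γ ∧
      ∃ B : Set Ordinal.{0}, B ⊆ Set.Iio γ ∧ PredExt (Vrank κ) (vN '' A) (Vrank γ) (vN '' B)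

/-- `κ` is strongly pseudo `θ`-uplifting: for every `A ⊆ κ` there is an
ordinal `γ ≥ θ` (not necessarily inaccessible) and `A* ⊆ γ` with
`⟨V_κ,∈,A⟩ ≺ ⟨V_γ,∈,A*⟩` a proper elementary extension. -/
def SPUplift (κ θ : Ordinal.{0}) : Prop :=
  ∀ A : Set Ordinal.{0}, A ⊆ Set.Iio κ →
    ∃ γ : Ordinal.{0}, θ ≤ γ ∧ κ < γ ∧
      ∃ B : Set Ordinal.{0}, B ⊆ Set.Iio γ ∧ PredExt (Vrank κ) (vN '' A) (Vrank γ) (vN '' B)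

/-- `κ` is strongly uplifting: strongly `θ`-uplifting for every `θ`. -/
def StronglyUplifting (κ : Ordinal.{0}) : Prop := ∀ θ, SUplift κ θ

/-- `κ` is strongly pseudo uplifting: strongly pseudo `θ`-uplifting for every `θ`. -/
def StronglyPseudoUplifting (κ : Ordinal.{0}) : Prop := ∀ θ, SPUplift κ θ

/-! ### κ-models and unfoldability embeddings -/

/-- A `κ`-model: a transitive set of size `κ`, containing `κ`, closed under `<κ`-sequences,
and satisfying `ZFC⁻`. -/
structure IsKappaModel (κ : Cardinal.{0}) (M : ZFSet.{0}) : Prop where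
  transitive : M.IsTransitive
  card_eq : Cardinal.mk M.toSet = Cardinal.lift.{1} κ
  kappa_mem : vN κ.ord ∈ M
  seq_closed : ∀ β : Ordinal.{0}, β < κ.ord → ∀ f : ZFSet.{0}, ZFSet.IsFunc (vN β) M f → f ∈ M
  zfc_minus : SatT M ZFCminus

/-- `κ` is superstrongly `θ`-unfoldable: for each `A ∈ H_{κ⁺}` there is a `κ`-model `M ⊨ ZFC`
with `A ∈ M` and a transitive set `N` with an elementary embedding `j : M → N` with critical
point `κ`, `j(κ) ≥ θ`, and `V_{j(κ)} ⊆ N`. -/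
def SSUnfold (κ : Cardinal.{0}) (θ : Ordinal.{0}) : Prop :=
  κ.IsInaccessible ∧ ∀ A : ZFSet.{0}, A ∈ Hset (Order.succ κ) →
    ∃ M : ZFSet.{0}, IsKappaModel κ M ∧ SatT M ZFC ∧ A ∈ M ∧
      ∃ N : ZFSet.{0}, N.IsTransitive ∧
        ∃ j : ZFSet.{0} → ZFSet.{0}, ElemEmb M.toSet N.toSet j ∧
          (∀ β : Ordinal.{0}, β < κ.ord → j (vN β) = vN β) ∧
          ∃ γ : Ordinal.{0}, j (vN κ.ord) = vN γ ∧ κ.ord < γ ∧ θ ≤ γ ∧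
            Vrank γ ⊆ N.toSet

/-- `κ` is almost-hugely `θ`-unfoldable: for each `A ∈ H_{κ⁺}` there is a `κ`-model `M ⊨ ZFC`
with `A ∈ M` and a transitive set `N` with an elementary embedding `j : M → N` with critical
point `κ`, `j(κ) ≥ θ`, and `N^{<j(κ)} ⊆ N`. -/
def AHUnfold (κ : Cardinal.{0}) (θ : Ordinal.{0}) : Prop :=
  κ.IsInaccessible ∧ ∀ A : ZFSet.{0}, A ∈ Hset (Order.succ κ) →
    ∃ M : ZFSet.{0}, IsKappaModel κ M ∧ SatT M ZFC ∧ A ∈ M ∧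
      ∃ N : ZFSet.{0}, N.IsTransitive ∧
        ∃ j : ZFSet.{0} → ZFSet.{0}, ElemEmb M.toSet N.toSet j ∧
          (∀ β : Ordinal.{0}, β < κ.ord → j (vN β) = vN β) ∧
          ∃ γ : Ordinal.{0}, j (vN κ.ord) = vN γ ∧ κ.ord < γ ∧ θ ≤ γ ∧
            ∀ β : Ordinal.{0}, β < γ → ∀ f : ZFSet.{0}, ZFSet.IsFunc (vN β) N f → f ∈ N

/-- `κ` is superstrongly unfoldable. -/
def SuperstronglyUnfoldable (κ : Cardinal.{0}) : Prop := ∀ θ, SSUnfold κ θ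

/-- `κ` is almost-hugely unfoldable. -/
def AlmostHugelyUnfoldable (κ : Cardinal.{0}) : Prop := ∀ θ, AHUnfold κ θ

/-! ### Clubs, subtlety, degrees of strong unfoldability, ordinal definability -/

/-- `C` is a closed unbounded subset of `κ`. -/
def IsClubIn (C : Set Ordinal.{0}) (κ : Ordinal.{0}) : Prop :=
  C ⊆ Set.Iio κ ∧ (∀ θ < κ, ∃ δ ∈ C, θ ≤ δ) ∧
    ∀ θ < κ, 0 < θ → (∀ β < θ, ∃ δ ∈ C, β ≤ δ ∧ δ < θ) → θ ∈ C

/-- `δ` is subtle: for every club `C ⊆ δ` and every sequence `⟨A_α : α ∈ C⟩` with `A_α ⊆ α`,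
there are `α < β` in `C` with `A_α = A_β ∩ α`. -/
def IsSubtle (δ : Ordinal.{0}) : Prop :=
  ∀ C : Set Ordinal.{0}, IsClubIn C δ →
    ∀ A : Ordinal.{0} → Set Ordinal.{0}, (∀ α ∈ C, A α ⊆ Set.Iio α) →
      ∃ α ∈ C, ∃ β ∈ C, α < β ∧ A α = A β ∩ Set.Iio α

/-- Application of a set-theoretic function (coded as a set of Kuratowski pairs). -/
noncomputable def zApp (f x : ZFSet.{0}) : ZFSet.{0} :=
  letI := Classical.dec (∃ y, ZFSet.pair x y ∈ f)
  if h : ∃ y, ZFSet.pair x y ∈ f then h.choose else ∅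

/-- `κ` is strongly `θ`-unfoldable of degree `α`, relativized to the (transitive) universe `U`:
for each ordinal `θ` in `U` and each `A ∈ H_{κ⁺} ∩ U` there is a `κ`-model `M ∈ U` satisfying
`ZFC` with `A ∈ M`, and a transitive set `N ∈ U` with `α ∈ N` and an elementary embedding
`j : M → N` in `U` with critical point `κ`, `j(κ) > max(θ,α)` and `V_θ ⊆ N`, such that `κ`
is strongly unfoldable of every degree `β < α` in `N`.  Taking `U` to be the class of all
sets gives the unrelativized notion. -/
def DegUnfold (κ : Cardinal.{0}) (α : Ordinal.{0}) (U : Set ZFSet.{0}) : Prop :=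
  ∀ θ : Ordinal.{0}, vN θ ∈ U →
    ∀ A : ZFSet.{0}, A ∈ U → A ∈ Hset (Order.succ κ) →
      ∃ M : ZFSet.{0}, M ∈ U ∧ IsKappaModel κ M ∧ SatT M ZFC ∧ A ∈ M ∧
        ∃ N : ZFSet.{0}, N ∈ U ∧ N.IsTransitive ∧ vN α ∈ N ∧
          ∃ j : ZFSet.{0}, j ∈ U ∧ ZFSet.IsFunc M N j ∧
            ElemEmb M.toSet N.toSet (zApp j) ∧
            (∀ β : Ordinal.{0}, β < κ.ord → zApp j (vN β) = vN β) ∧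
            (∃ γ : Ordinal.{0}, zApp j (vN κ.ord) = vN γ ∧ θ < γ ∧ α < γ) ∧
            Vrank θ ⊆ N.toSet ∧
            ∀ β : Ordinal.{0}, β < α → DegUnfold κ β N.toSet
termination_by α
decreasing_by exact ‹β < α›

/-- `x` is ordinal definable: it is the unique set satisfying some first-order formula
with ordinal parameters in some rank-initial segment `V_η` of the universe. -/
def IsOD (x : ZFSet.{0}) : Prop :=
  ∃ (η : Ordinal.{0}) (k : ℕ) (φ : memL.Formula (Fin (k + 1))) (p : Fin k → Ordinal.{0}),
    x ∈ Vrank η ∧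
    ∃ hp : ∀ i, vN (p i) ∈ Vrank η,
      ∀ y : (Vrank η : Set ZFSet.{0}),
        (letI := strMem (Vrank η);
          Formula.Realize φ (Fin.cases y fun i => (⟨vN (p i), hp i⟩ : Vrank η))) ↔
        (y : ZFSet.{0}) = x

end SUP

/-! If `2 ^ |β| ≥ κ` for some `β < κ`, then distinct subsets of `β`, indexed by the ordinals
below `κ`, carry a well-order `w` of type `κ`, and `w` has rank at most `β + 3 < κ`, so `w ∈ V_κ`.
Inside `V_κ`, every ordinal `δ < κ` maps order-preservingly into the `w`-predecessors of the
`δ`-th point of `w`, by a map that again lies in `V_κ`. This is a first-order property of `w`, so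
by elementarity it holds in `W` as well, and applied to the ordinal `κ ∈ W` it yields a strictly
increasing map from `κ` into a proper initial segment of `κ`, which is impossible. Hence
`2 ^ |β| < |κ|` for all `β < κ`; were `κ` not a cardinal, `β = |κ|` would contradict Cantor's
theorem. Elementarity also makes `κ` a limit ordinal, so both `V_κ` and `W` are closed under
pairing, which is what the first-order coding of ordered pairs needs. -/

namespace SUP
open FirstOrder Language Ordinal Cardinal Order Function Set

attribute [local instance] strMem

theorem vN_eq_toZFSet (o : Ordinal.{0}) : vN o = o.toZFSet := by
  induction o using WellFoundedLT.induction with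
  | _ o IH =>
    ext z
    rw [vN, ZFSet.mem_range, mem_toZFSet_iff]
    constructor
    · rintro ⟨i, rfl⟩
      obtain ⟨β, hβ⟩ := (ToType.mk (o := o)).symm i
      exact ⟨β, hβ, (IH β hβ).symm⟩
    · rintro ⟨β, hβ, rfl⟩
      exact ⟨ToType.mk ⟨β, hβ⟩, by simp [IH β hβ]⟩

theorem rank_pair_eq (x y : ZFSet.{0}) :
    (x.pair y).rank = succ (succ (max x.rank y.rank)) := by
  simp [ZFSet.pair, ZFSet.rank_singleton, max_add_add_right]

theorem rank_pair_lt_add_three {x y : ZFSet.{0}} {m : Ordinal.{0}} (hx : x.rank ≤ m)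
    (hy : y.rank ≤ m) : (x.pair y).rank < m + 3 := by
  rw [rank_pair_eq]
  calc succ (succ (max x.rank y.rank)) ≤ m + 1 + 1 := succ_le_succ (succ_le_succ (max_le hx hy))
    _ < m + 3 := by rw [add_assoc]; exact (add_lt_add_iff_left m).2 (by norm_num)

def IsTransitiveClass (S : Set ZFSet.{0}) : Prop := ∀ ⦃x⦄, x ∈ S → ∀ y ∈ x, y ∈ S

def IsPairClosed (S : Set ZFSet.{0}) : Prop := ∀ x ∈ S, ∀ y ∈ S, ({x, y} : ZFSet) ∈ S

namespace IsTransitiveClass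

variable {S : Set ZFSet.{0}} (hS : IsTransitiveClass S)
include hS

theorem forall_iff_eq {x y : ZFSet.{0}} (hx : x ∈ S) (hy : ∀ z ∈ y, z ∈ S) :
    (∀ z ∈ S, z ∈ x ↔ z ∈ y) ↔ x = y :=
  ⟨fun h => ZFSet.ext fun z => ⟨fun hz => (h z (hS hx z hz)).1 hz,
    fun hz => (h z (hy z hz)).2 hz⟩, fun h _ _ => h ▸ Iff.rfl⟩

theorem mem_of_pair_mem {a b f : ZFSet.{0}} (hf : f ∈ S) (h : a.pair b ∈ f) :
    a ∈ S ∧ b ∈ S := by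
  have hab : ({a, b} : ZFSet) ∈ S := hS (hS hf _ h) _ (by simp [ZFSet.pair])
  exact ⟨hS hab a (by simp), hS hab b (by simp)⟩

end IsTransitiveClass

@[simp]
theorem mem_Vrank {x : ZFSet.{0}} {α : Ordinal.{0}} : x ∈ Vrank α ↔ x.rank < α := Iff.rfl

@[simp]
theorem toZFSet_mem_Vrank {o α : Ordinal.{0}} : o.toZFSet ∈ Vrank α ↔ o < α := by
  simp

theorem isTransitiveClass_Vrank (α : Ordinal.{0}) : IsTransitiveClass (Vrank α) :=
  fun _ hx _ hy => (ZFSet.rank_lt_of_mem hy).trans hx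

theorem isPairClosed_Vrank {α : Ordinal.{0}} (hα : IsSuccLimit α) : IsPairClosed (Vrank α) :=
  fun _ hx _ hy => by
    simp only [mem_Vrank, ZFSet.rank_pair, max_lt_iff] at hx hy ⊢
    exact ⟨hα.succ_lt hx, hα.succ_lt hy⟩

theorem range_mem_Vrank {ι : Type*} [Small.{0} ι] (g : ι → ZFSet.{0}) {μ κ : Ordinal.{0}}
    (hμ : μ < κ) (hg : ∀ i, (g i).rank < μ) : ZFSet.range g ∈ Vrank κ :=
  (ZFSet.rank_le_iff.2 fun y hy => by
    obtain ⟨i, rfl⟩ := ZFSet.mem_range.1 hy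
    exact hg i).trans_lt hμ

section Realize

variable {S : Set ZFSet.{0}} {n : ℕ} {v : Empty → S} {xs : Fin n → S}

theorem realize_mF {i j : Fin n} :
    (mF i j).Realize v xs ↔ (xs i : ZFSet) ∈ (xs j : ZFSet) := by
  rw [mF, BoundedFormula.realize_rel₂]; rfl

theorem realize_eF {i j : Fin n} : (eF i j).Realize v xs ↔ xs i = xs j := by
  rw [eF, BoundedFormula.realize_bdEqual]; rfl

variable (hS : IsTransitiveClass S)
include hS

theorem realize_singF {i a : Fin n} :
    (singF i a).Realize v xs ↔ (xs i : ZFSet) = {(xs a : ZFSet)} := by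
  rw [← hS.forall_iff_eq (xs i).2 (by simp)]
  simp [singF, realize_mF, realize_eF, Subtype.ext_iff]

theorem realize_upairF {i a b : Fin n} :
    (upairF i a b).Realize v xs ↔ (xs i : ZFSet) = {(xs a : ZFSet), (xs b : ZFSet)} := by
  rw [← hS.forall_iff_eq (xs i).2 (by simp)]
  simp [upairF, realize_mF, realize_eF, Subtype.ext_iff]

theorem realize_axPair : S ⊨ axPair ↔ IsPairClosed S := by
  simp only [Sentence.Realize, Formula.Realize, axPair, BoundedFormula.realize_all,
    BoundedFormula.realize_ex, BoundedFormula.realize_iff, BoundedFormula.realize_sup, realize_mF,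
    realize_eF, Matrix.empty_eq (default : Fin 0 → S), Matrix.Fin.snoc_vecEmpty,
    Matrix.Fin.snoc_vecCons, Matrix.cons_val, Matrix.cons_val_zero, Matrix.cons_val_one,
    Fin.isValue, Nat.succ_eq_add_one, Nat.reduceAdd, Subtype.forall, Subtype.exists, exists_prop,
    Subtype.mk.injEq]
  refine forall₂_congr fun a ha => forall₂_congr fun b hb => ⟨?_, fun h => ⟨_, h, by simp⟩⟩
  rintro ⟨p, hp, hpab⟩
  simp_rw [← ZFSet.mem_pair] at hpab
  have hab : ∀ z ∈ ({a, b} : ZFSet), z ∈ S := by simp [ha, hb]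
  exact (hS.forall_iff_eq hp hab).1 hpab ▸ hp

variable (hP : IsPairClosed S)
include hP

theorem realize_opairF {i a b : Fin n} :
    (opairF i a b).Realize v xs ↔ (xs i : ZFSet) = (xs a : ZFSet).pair (xs b) := by
  have hpair : ∀ z ∈ (xs a : ZFSet).pair (xs b), z ∈ S := by
    simp only [ZFSet.pair, ZFSet.mem_pair]
    rintro z (rfl | rfl)
    exacts [by simpa using hP _ (xs a).2 _ (xs a).2, hP _ (xs a).2 _ (xs b).2]
  rw [← hS.forall_iff_eq (xs i).2 hpair]
  simp [opairF, realize_mF, realize_singF hS, realize_upairF hS, ZFSet.pair]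

theorem realize_opMemF {a b r : Fin n} :
    (opMemF a b r).Realize v xs ↔ (xs a : ZFSet).pair (xs b) ∈ (xs r : ZFSet) := by
  simp only [opMemF, BoundedFormula.realize_ex, BoundedFormula.realize_inf, realize_mF,
    realize_opairF hS hP, Fin.snoc_last, Fin.snoc_castSucc]
  exact ⟨fun ⟨z, hz, hp⟩ => hp ▸ hz, fun h => ⟨⟨_, hS (xs r).2 _ h⟩, h, rfl⟩⟩

end Realize

section MemExt

variable {S T : Set ZFSet.{0}} {n : ℕ}

theorem MemExt.realize_iff (h : MemExt S T) (φ : memL.BoundedFormula Empty n) (xs : Fin n → S) :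
    φ.Realize default xs ↔ φ.Realize default fun i => (⟨xs i, h.1 (xs i).2⟩ : T) := by
  simpa only [Formula.realize_relabel, BoundedFormula.realize_toFormula, Function.comp_assoc,
    Sum.elim_comp_inr, Function.comp_id, Unique.eq_default] using
    h.2 n (φ.toFormula.relabel (Sum.elim Empty.elim id)) xs

theorem MemExt.realize_sentence (h : MemExt S T) (φ : memL.Sentence) : S ⊨ φ ↔ T ⊨ φ := by
  simpa only [Sentence.Realize, Formula.Realize, Unique.eq_default] using
    h.realize_iff φ default

theorem MemExt.nonempty (h : MemExt S T) (hT : T.Nonempty) : S.Nonempty := by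
  have := (h.realize_sentence (∃' eF 0 0)).2
  simp only [Sentence.Realize, Formula.Realize, BoundedFormula.realize_ex] at this
  obtain ⟨x, -⟩ := this ⟨⟨hT.some, hT.some_mem⟩, rfl⟩
  exact ⟨x, x.2⟩

theorem MemExt.exists_mem {a c : ZFSet.{0}} (h : MemExt S T) (ha : a ∈ S) (hc : c ∈ T)
    (hac : a ∈ c) : ∃ z ∈ S, a ∈ z := by
  have := (h.realize_iff (∃' mF 0 1) ![⟨a, ha⟩]).2
  simp only [BoundedFormula.realize_ex, realize_mF] at this
  obtain ⟨z, hz⟩ := this ⟨⟨c, hc⟩, hac⟩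
  exact ⟨z, z.2, hz⟩

theorem MemExt.isPairClosed (h : MemExt S T) (hS : IsTransitiveClass S)
    (hT : IsTransitiveClass T) (hP : IsPairClosed S) : IsPairClosed T :=
  (realize_axPair hT).1 ((h.realize_sentence axPair).1 ((realize_axPair hS).2 hP))

theorem isSuccLimit_of_memExt {κ : Ordinal.{0}} (h : MemExt (Vrank κ) T)
    (hκ : κ.toZFSet ∈ T) : IsSuccLimit κ := by
  rw [isSuccLimit_iff, isSuccPrelimit_iff_succ_lt]
  refine ⟨?_, fun α hα => ?_⟩
  · obtain ⟨x, hx⟩ := h.nonempty ⟨_, hκ⟩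
    exact (pos_of_gt hx).ne'
  · obtain ⟨z, hz, hαz⟩ :=
      h.exists_mem (toZFSet_mem_Vrank.2 hα) hκ (toZFSet_mem_toZFSet_iff.2 hα)
    have := ZFSet.rank_lt_of_mem hαz
    rw [rank_toZFSet] at this
    exact (succ_le_of_lt this).trans_lt hz

end MemExt

def OrdinalsEmbedBelow (S : Set ZFSet.{0}) (w : ZFSet.{0}) : Prop :=
  ∀ d ∈ S, d.IsOrdinal → ∃ x ∈ S, ∃ f ∈ S,
    (∀ γ ∈ d, ∃ b, γ.pair b ∈ f ∧ b.pair x ∈ w) ∧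
    ∀ γ' ∈ d, ∀ γ ∈ γ', ∀ b b', γ.pair b ∈ f → γ'.pair b' ∈ f → b.pair b' ∈ w

/- Variables are numbered by binding depth: `w = 0`, `d = 1`, `x = 2`, `f = 3`, then the
quantified `γ, γ', b, b'` (in `isOrdinalF`: `a = 2`, `b = 3`). -/

def isOrdinalF : memL.BoundedFormula Empty 2 :=
  ∀' ∀' (((mF 2 3 ⊓ mF 3 1) ⟹ mF 2 1) ⊓ ((mF 2 1 ⊓ mF 3 1) ⟹ (mF 2 3 ⊔ eF 2 3 ⊔ mF 3 2)))

def coversF : memL.BoundedFormula Empty 4 :=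
  ∀' (mF 4 1 ⟹ ∃' (opMemF 4 5 3 ⊓ opMemF 5 2 0))

def monotoneF : memL.BoundedFormula Empty 4 :=
  ∀' ∀' ∀' ∀' ((mF 5 1 ⊓ mF 4 5 ⊓ opMemF 4 6 3 ⊓ opMemF 5 7 3) ⟹ opMemF 6 7 0)

def ordinalsEmbedBelowF : memL.BoundedFormula Empty 1 :=
  ∀' (isOrdinalF ⟹ ∃' ∃' (coversF ⊓ monotoneF))

section Realize

variable {S : Set ZFSet.{0}} {v : Empty → S} (hS : IsTransitiveClass S)
include hS

theorem realize_isOrdinalF {w d : S} :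
    isOrdinalF.Realize v ![w, d] ↔ (d : ZFSet).IsOrdinal := by
  simp only [isOrdinalF, BoundedFormula.realize_all, BoundedFormula.realize_inf,
    BoundedFormula.realize_imp, BoundedFormula.realize_sup, realize_mF, realize_eF,
    Matrix.Fin.snoc_vecCons, Matrix.Fin.snoc_vecEmpty, Matrix.cons_val, Matrix.cons_val_one,
    Matrix.cons_val_zero, Fin.isValue, Nat.succ_eq_add_one, Nat.reduceAdd, and_imp,
    Subtype.forall, Subtype.mk.injEq]
  constructor
  · intro h
    have hdS := hS d.2
    refine ZFSet.isOrdinal_iff_trichotomous.2 ⟨fun b hb a ha => ?_, ⟨fun a b hab hba => ?_⟩⟩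
    · exact (h a (hS (hdS b hb) a ha) b (hdS b hb)).1 ha hb
    · have := (h a (hdS a a.2) b (hdS b b.2)).2 a.2 b.2
      exact Subtype.ext ((this.resolve_right hba).resolve_left hab)
  · intro hd a _ b _
    refine ⟨hd.mem_trans, fun ha hb => ?_⟩
    rw [or_assoc]
    exact (hd.mem ha).mem_trichotomous (hd.mem hb)

variable (hP : IsPairClosed S)
include hP

theorem realize_coversF {w d x f : S} :
    coversF.Realize v ![w, d, x, f] ↔
      ∀ γ ∈ (d : ZFSet), ∃ b, γ.pair b ∈ (f : ZFSet) ∧ b.pair x ∈ (w : ZFSet) := by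
  simp only [coversF, BoundedFormula.realize_all, BoundedFormula.realize_imp,
    BoundedFormula.realize_ex, BoundedFormula.realize_inf, realize_mF, realize_opMemF hS hP,
    Matrix.Fin.snoc_vecCons, Matrix.Fin.snoc_vecEmpty, Matrix.cons_val, Matrix.cons_val_one,
    Matrix.cons_val_zero, Fin.isValue, Nat.succ_eq_add_one, Nat.reduceAdd, Subtype.exists,
    exists_and_left, exists_prop, Subtype.forall]
  refine ⟨fun h γ hγ => ?_, fun h γ _ hγ => ?_⟩
  · obtain ⟨b, hb, -, hbx⟩ := h γ (hS d.2 γ hγ) hγ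
    exact ⟨b, hb, hbx⟩
  · obtain ⟨b, hb, hbx⟩ := h γ hγ
    exact ⟨b, hb, (hS.mem_of_pair_mem f.2 hb).2, hbx⟩

theorem realize_monotoneF {w d x f : S} :
    monotoneF.Realize v ![w, d, x, f] ↔
      ∀ γ' ∈ (d : ZFSet), ∀ γ ∈ γ', ∀ b b', γ.pair b ∈ (f : ZFSet) →
        γ'.pair b' ∈ (f : ZFSet) → b.pair b' ∈ (w : ZFSet) := by
  simp only [monotoneF, BoundedFormula.realize_all, BoundedFormula.realize_imp,
    BoundedFormula.realize_inf, realize_mF, realize_opMemF hS hP, Matrix.Fin.snoc_vecCons,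
    Matrix.Fin.snoc_vecEmpty, Matrix.cons_val, Matrix.cons_val_one, Matrix.cons_val_zero,
    Fin.isValue, Nat.succ_eq_add_one, Nat.reduceAdd, and_imp, Subtype.forall]
  refine ⟨fun h γ' hγ' γ hγ b b' hb hb' => ?_,
    fun h γ _ γ' _ b _ b' _ hγ' hγ => h γ' hγ' γ hγ b b'⟩
  have hγ'S := (hS.mem_of_pair_mem f.2 hb').1
  exact h γ (hS hγ'S γ hγ) γ' hγ'S b (hS.mem_of_pair_mem f.2 hb).2 b'
    (hS.mem_of_pair_mem f.2 hb').2 hγ' hγ hb hb'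

theorem realize_ordinalsEmbedBelowF {w : S} :
    ordinalsEmbedBelowF.Realize v ![w] ↔ OrdinalsEmbedBelow S w := by
  simp only [ordinalsEmbedBelowF, OrdinalsEmbedBelow, BoundedFormula.realize_all,
    BoundedFormula.realize_imp, BoundedFormula.realize_ex, BoundedFormula.realize_inf,
    realize_isOrdinalF hS, realize_coversF hS hP, realize_monotoneF hS hP,
    Matrix.Fin.snoc_vecCons, Matrix.Fin.snoc_vecEmpty, Nat.succ_eq_add_one, Nat.reduceAdd,
    Subtype.exists, exists_and_left, exists_prop, Subtype.forall]
  grind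

end Realize

theorem MemExt.ordinalsEmbedBelow {S T : Set ZFSet.{0}} (h : MemExt S T)
    (hS : IsTransitiveClass S) (hPS : IsPairClosed S) (hT : IsTransitiveClass T)
    (hPT : IsPairClosed T) {w : ZFSet.{0}} (hw : w ∈ S) (hE : OrdinalsEmbedBelow S w) :
    OrdinalsEmbedBelow T w := by
  have key := h.realize_iff ordinalsEmbedBelowF (![⟨w, hw⟩] : Fin 1 → S)
  have hxs : (fun i => ⟨((![⟨w, hw⟩] : Fin 1 → S) i : ZFSet),
      h.1 ((![⟨w, hw⟩] : Fin 1 → S) i).2⟩ : Fin 1 → T) = ![⟨w, h.1 hw⟩] := by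
    ext i
    fin_cases i
    rfl
  rw [hxs, realize_ordinalsEmbedBelowF hS hPS, realize_ordinalsEmbedBelowF hT hPT] at key
  exact key.1 hE

noncomputable def ltGraph {α : Type*} [LT α] [Small.{0} α] (G : α → ZFSet.{0}) : ZFSet.{0} :=
  ZFSet.range fun q : {q : α × α // q.1 < q.2} => (G q.1.1).pair (G q.1.2)

section ltGraph

variable {α : Type*} [LT α] [Small.{0} α] {G : α → ZFSet.{0}}

theorem pair_mem_ltGraph {a b : ZFSet.{0}} :
    a.pair b ∈ ltGraph G ↔ ∃ i j, i < j ∧ G i = a ∧ G j = b := by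
  simp only [ltGraph, ZFSet.mem_range, ZFSet.pair_inj, Subtype.exists, exists_and_left,
    exists_prop, Prod.exists]
  grind

theorem pair_mem_ltGraph_iff (hG : Injective G) {i j : α} :
    (G i).pair (G j) ∈ ltGraph G ↔ i < j := by
  simp [pair_mem_ltGraph, hG.eq_iff]

theorem ltGraph_mem_Vrank {β κ : Ordinal.{0}} (hκ : IsSuccLimit κ) (hβ : β < κ)
    (hG : ∀ i, (G i).rank ≤ β) : ltGraph G ∈ Vrank κ :=
  range_mem_Vrank _ (by simpa using hκ.add_natCast_lt hβ 3)
    fun _ => rank_pair_lt_add_three (hG _) (hG _)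

end ltGraph

theorem exists_injective_rank_le {α : Type} {β : Ordinal.{0}} (h : #α ≤ 2 ^ β.card) :
    ∃ G : α → ZFSet.{0}, Injective G ∧ ∀ i, (G i).rank ≤ β := by
  have : Cardinal.lift.{1} #α ≤ Cardinal.lift.{0} #(β.toZFSet.powerset) := by
    rwa [ZFSet.cardinalMk_coe_sort, ZFSet.card_powerset, card_toZFSet, Cardinal.lift_id'.{0, 1},
      Cardinal.lift_le]
  obtain ⟨e⟩ := lift_mk_le'.1 this
  refine ⟨fun i => (e i).1, fun i j hij => e.injective (Subtype.ext hij), fun i => ?_⟩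
  simpa using ZFSet.rank_mono (ZFSet.mem_powerset.1 (e i).2)

theorem ordinalsEmbedBelow_Vrank {β κ : Ordinal.{0}} (hκ : IsSuccLimit κ) (hβ : β < κ)
    (G : Iio κ → ZFSet.{0}) (hG : ∀ i, (G i).rank ≤ β) :
    OrdinalsEmbedBelow (Vrank κ) (ltGraph G) := by
  intro d hd hdo
  obtain ⟨δ, rfl⟩ : ∃ δ : Ordinal.{0}, δ.toZFSet = d := ⟨d.rank, hdo.toZFSet_rank_eq⟩
  have hδ : δ < κ := toZFSet_mem_Vrank.1 hd
  let F : Iio δ → ZFSet.{0} := fun ξ => ξ.1.toZFSet.pair (G ⟨ξ, ξ.2.trans hδ⟩)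
  have hF : ZFSet.range F ∈ Vrank κ :=
    range_mem_Vrank F (by simpa using hκ.add_natCast_lt (max_lt hδ hβ) 3) fun ξ =>
      rank_pair_lt_add_three (by simpa using le_max_of_le_left ξ.2.le) (le_max_of_le_right (hG _))
  refine ⟨G ⟨δ, hδ⟩, (hG _).trans_lt hβ, ZFSet.range F, hF, fun γ hγ => ?_, ?_⟩
  · obtain ⟨ξ, hξ, rfl⟩ := mem_toZFSet_iff.1 hγ
    exact ⟨_, ZFSet.mem_range.2 ⟨⟨ξ, hξ⟩, rfl⟩,
      (pair_mem_ltGraph (G := G)).2 ⟨_, _, Subtype.mk_lt_mk.2 hξ, rfl, rfl⟩⟩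
  · intro γ' _ γ hγ b b' hb hb'
    obtain ⟨⟨ξ, hξ⟩, hξeq⟩ := ZFSet.mem_range.1 hb
    obtain ⟨⟨ξ', hξ'⟩, hξ'eq⟩ := ZFSet.mem_range.1 hb'
    obtain ⟨rfl, rfl⟩ := ZFSet.pair_inj.1 hξeq
    obtain ⟨rfl, rfl⟩ := ZFSet.pair_inj.1 hξ'eq
    exact (pair_mem_ltGraph (G := G)).2
      ⟨_, _, Subtype.mk_lt_mk.2 (toZFSet_mem_toZFSet_iff.1 hγ), rfl, rfl⟩

theorem not_ordinalsEmbedBelow {κ : Ordinal.{0}} (hκ : 0 < κ) {T : Set ZFSet.{0}}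
    (hκT : κ.toZFSet ∈ T) (G : Iio κ → ZFSet.{0}) (hG : Injective G) :
    ¬ OrdinalsEmbedBelow T (ltGraph G) := by
  intro hE
  obtain ⟨x, -, f, -, hcov, hmono⟩ := hE _ hκT (ZFSet.isOrdinal_toZFSet κ)
  choose b hbf hbx using fun γ : Iio κ => hcov _ (toZFSet_mem_toZFSet_iff.2 γ.2)
  obtain ⟨-, j, -, -, rfl⟩ := pair_mem_ltGraph.1 (hbx ⟨0, hκ⟩)
  have hbelow : ∀ γ, ∃ i < j, G i = b γ := fun γ => by
    obtain ⟨i, j', hij', hi, hj'⟩ := pair_mem_ltGraph.1 (hbx γ)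
    exact ⟨i, hG hj' ▸ hij', hi⟩
  choose i hij hi using hbelow
  have hi_mono : StrictMono i := fun γ γ' hγγ' => by
    have := hmono _ (toZFSet_mem_toZFSet_iff.2 γ'.2) _ (toZFSet_mem_toZFSet_iff.2 hγγ') _ _
      (hbf γ) (hbf γ')
    rwa [← hi, ← hi, pair_mem_ltGraph_iff hG] at this
  exact (hi_mono.le_apply.trans_lt (hij j)).false

theorem two_power_lt_card_of_memExt {κ β : Ordinal.{0}} {T : Set ZFSet.{0}}
    (hT : IsTransitiveClass T) (h : MemExt (Vrank κ) T) (hκT : κ.toZFSet ∈ T) (hβ : β < κ) :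
    2 ^ β.card < κ.card := by
  by_contra! hle
  obtain ⟨G, hG, hGβ⟩ := exists_injective_rank_le (α := κ.ToType) (by rwa [mk_toType])
  have hκ := isSuccLimit_of_memExt h hκT
  have hS := isTransitiveClass_Vrank κ
  have hPS := isPairClosed_Vrank hκ
  have hE := ordinalsEmbedBelow_Vrank hκ hβ (G ∘ ToType.mk) fun _ => hGβ _
  refine not_ordinalsEmbedBelow hκ.pos hκT (G ∘ ToType.mk) (hG.comp ToType.mk.injective) ?_
  exact h.ordinalsEmbedBelow hS hPS hT (h.isPairClosed hS hT hPS)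
    (ltGraph_mem_Vrank hκ hβ fun _ => hGβ _) hE

theorem isStrongLimit_card_of_two_power_lt {κ : Ordinal.{0}} (hκ : κ ≠ 0)
    (h : ∀ β < κ, 2 ^ β.card < κ.card) : κ.card.IsStrongLimit ∧ κ.card.ord = κ := by
  have hord : κ.card.ord = κ := (ord_card_le κ).eq_of_not_lt fun hlt => by
    simpa using (h _ hlt).trans (cantor _)
  refine ⟨⟨by simpa using hκ, fun μ hμ => ?_⟩, hord⟩
  simpa using h μ.ord (hord ▸ ord_lt_ord.2 hμ)

theorem statement3_general (κ : Ordinal.{0}) (W : ZFSet.{0}) (htrans : W.IsTransitive)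
    (hκW : vN κ ∈ W) (helem : MemExt (Vrank κ) W.toSet) :
    κ.card.IsStrongLimit ∧ κ.card.ord = κ := by
  rw [vN_eq_toZFSet] at hκW
  have hW : IsTransitiveClass W.toSet := fun x hx y hy => htrans x hx hy
  exact isStrongLimit_card_of_two_power_lt (isSuccLimit_of_memExt helem hκW).pos.ne'
    fun β hβ => two_power_lt_card_of_memExt hW helem hκW hβ

/-- If κ is an ordinal and there is a transitive set W with κ ∈ W such that
V_κ ≺ W is a proper elementary extension, then κ is a strong limit cardinal. -/
theorem statement3 (κ : Ordinal.{0}) (W : ZFSet.{0}) (htrans : W.IsTransitive)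
    (hκW : vN κ ∈ W) (helem : MemExt (Vrank κ) W.toSet) (hproper : Vrank κ ≠ W.toSet) :
    κ.card.IsStrongLimit ∧ κ.card.ord = κ :=
  statement3_general κ W htrans hκW helem

end SUP
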